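/- Let providers s_1, …, s_m have nondecreasing availabilities τ_1 ≤ ⋯ ≤ τ_m, and let n jobs with lengths w_1, …, w_n arrive one at a time in an arbitrary (adversarial) order. The Greedy-Shortest Matching algorithm (GSM) matches each arriving job d to the still-unmatched provider of smallest availability among those with τ_i ≥ w_d, and rejects d if no unmatched feasible provider exists; matches are irrevocable. Then the matching M_GSM produced by GSM has maximum cardinality among all matchings of the feasibility graph, and |M_GSM| = n − Δ, where Δ = max_{1 ≤ i ≤ m+1} (|D_{≥i}| − |S_{≥i}|)₊ with t(d) = min{i : τ_i ≥ w_d} (m+1 if none), D_{≥i} = {d : t(d) ≥ i}, and S_{≥i} = {i, …, m}. -/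

import Mathlib

/-- A matching: a set of provider–job pairs in which each provider and each job
appears at most once. -/
def IsMatching {m : ℕ} {J : Type*} (M : Finset (Fin m × J)) : Prop :=
  (∀ p ∈ M, ∀ q ∈ M, p.1 = q.1 → p = q) ∧ (∀ p ∈ M, ∀ q ∈ M, p.2 = q.2 → p = q)

/-- `t(d)`: the least (0-indexed) provider index feasible for a job of length `wd`,
or `m` if none is feasible. -/
noncomputable def tIdx {m : ℕ} (τ : Fin m → ℕ) (wd : ℕ) : ℕ :=
  sInf {i : ℕ | i = m ∨ ∃ h : i < m, wd ≤ τ ⟨i, h⟩}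

/-- The deficiency `Δ = max_i (|D_{≥i}| − |S_{≥i}|)₊`. -/
noncomputable def deficiency {m n : ℕ} (τ : Fin m → ℕ) (w : Fin n → ℕ) : ℕ :=
  (Finset.range (m + 1)).sup fun i =>
    (Finset.univ.filter fun d : Fin n => i ≤ tIdx τ (w d)).card - (m - i)

/-- GSM's choice for an arriving job of length `wd` given the already-used
providers: the unmatched feasible provider of least index (with `τ` monotone
this is the one of smallest availability), `none` if no unmatched feasible
provider exists (rejection). -/
def gsmPick {m : ℕ} (τ : Fin m → ℕ) (used : Finset (Fin m)) (wd : ℕ) :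
    Option (Fin m) :=
  let s := Finset.univ.filter fun i => i ∉ used ∧ wd ≤ τ i
  if h : s.Nonempty then some (s.min' h) else none

/-- The matching produced by GSM on the arrival sequence `ds` (irrevocable
online matches). -/
def gsmRunOn {m n : ℕ} (τ : Fin m → ℕ) (w : Fin n → ℕ) (ds : List (Fin n)) :
    Finset (Fin m × Fin n) :=
  ds.foldl (fun M d =>
    match gsmPick τ (M.image Prod.fst) (w d) with
    | some i => insert (i, d) M
    | none => M) ∅

/-!
For monotone `τ` the feasibility graph is a suffix graph: job `d` may use exactly the providers
`i ≥ t(d)`. Any matching serves at most `m - i` jobs of `D_{≥i}` and at most `n - |D_{≥i}|` of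
the others, so it has at most `n - Δ` edges. Conversely GSM never skips a free feasible
provider and rejects a job only when its whole feasible suffix is taken. Let `i₀` be the start
of the longest fully used suffix of providers: the providers `i ≥ i₀` are then all matched to
jobs of `D_{≥i₀}` (a job with `t(d) < i₀` matched there would have skipped the free provider
`i₀ - 1`), and the rejected jobs lie in `D_{≥i₀}` too, so `n - |M_GSM| ≤ |D_{≥i₀}| - (m - i₀)`.
-/

open Finset

theorem Fin.card_filter_le_val (m i : ℕ) : #{q : Fin m | i ≤ (q : ℕ)} = m - i := by
  have h := card_filter_add_card_filter_not (s := (univ : Finset (Fin m))) fun q => (q : ℕ) < i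
  simp only [not_lt, Fin.card_filter_val_lt, card_univ, Fintype.card_fin] at h
  omega

theorem tIdx_le_of_le {m : ℕ} (τ : Fin m → ℕ) {wd : ℕ} {i : Fin m} (h : wd ≤ τ i) :
    tIdx τ wd ≤ i :=
  Nat.sInf_le (Or.inr ⟨i.isLt, h⟩)

theorem tIdx_le_iff {m : ℕ} {τ : Fin m → ℕ} (hτ : Monotone τ) (wd : ℕ) (i : Fin m) :
    tIdx τ wd ≤ i ↔ wd ≤ τ i := by
  refine ⟨fun h => ?_, tIdx_le_of_le τ⟩
  have hne : {j | j = m ∨ ∃ h : j < m, wd ≤ τ ⟨j, h⟩}.Nonempty := ⟨m, Or.inl rfl⟩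
  rcases Nat.sInf_mem hne with hm | ⟨hlt, hle⟩
  · have htm : tIdx τ wd = m := hm
    have := i.isLt
    omega
  · exact hle.trans (hτ (show (⟨tIdx τ wd, hlt⟩ : Fin m) ≤ i from h))

namespace IsMatching

variable {m : ℕ} {J : Type*} {M A : Finset (Fin m × J)}

theorem card_image_fst (hM : IsMatching M) (hA : A ⊆ M) :
    #(A.image Prod.fst) = #A :=
  card_image_of_injOn fun p hp q hq h => hM.1 p (hA hp) q (hA hq) h

theorem card_image_snd [DecidableEq J] (hM : IsMatching M) (hA : A ⊆ M) :
    #(A.image Prod.snd) = #A :=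
  card_image_of_injOn fun p hp q hq h => hM.2 p (hA hp) q (hA hq) h

theorem insert [DecidableEq J] (hM : IsMatching M) {i : Fin m} {d : J}
    (hi : i ∉ M.image Prod.fst) (hd : d ∉ M.image Prod.snd) : IsMatching (insert (i, d) M) := by
  constructor
  · intro p hp q hq hpq
    rcases mem_insert.1 hp with rfl | hp <;> rcases mem_insert.1 hq with rfl | hq
    · rfl
    · exact absurd (mem_image_of_mem Prod.fst hq) (hpq ▸ hi)
    · exact absurd (mem_image_of_mem Prod.fst hp) (hpq.symm ▸ hi)
    · exact hM.1 p hp q hq hpq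
  · intro p hp q hq hpq
    rcases mem_insert.1 hp with rfl | hp <;> rcases mem_insert.1 hq with rfl | hq
    · rfl
    · exact absurd (mem_image_of_mem Prod.snd hq) (hpq ▸ hd)
    · exact absurd (mem_image_of_mem Prod.snd hp) (hpq.symm ▸ hd)
    · exact hM.2 p hp q hq hpq

theorem card_add_card_filter_le [DecidableEq J] [Fintype J] (hM : IsMatching M) {t : J → ℕ}
    (hfeas : ∀ p ∈ M, t p.2 ≤ p.1) (i : ℕ) :
    #M + #{d | i ≤ t d} ≤ Fintype.card J + (m - i) := by
  have hsuffix : #(M.filter fun p => i ≤ t p.2) ≤ m - i := by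
    rw [← hM.card_image_fst (filter_subset _ _), ← Fin.card_filter_le_val m i]
    refine card_le_card fun q hq => ?_
    obtain ⟨p, hp, rfl⟩ := mem_image.1 hq
    exact mem_filter.2 ⟨mem_univ _, (mem_filter.1 hp).2.trans (hfeas p (mem_filter.1 hp).1)⟩
  have hrest : #(M.filter fun p => ¬ i ≤ t p.2) ≤ #{d | ¬ i ≤ t d} := by
    rw [← hM.card_image_snd (filter_subset _ _)]
    refine card_le_card fun d hd => ?_
    obtain ⟨p, hp, rfl⟩ := mem_image.1 hd
    exact mem_filter.2 ⟨mem_univ _, (mem_filter.1 hp).2⟩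
  have hM_split := card_filter_add_card_filter_not (s := M) fun p => i ≤ t p.2
  have hJ_split := card_filter_add_card_filter_not (s := univ) fun d => i ≤ t d
  rw [card_univ] at hJ_split
  omega

end IsMatching

/-- The invariant of GSM once it has processed the jobs `P`, on the suffix graph in which
provider `i` is feasible for job `d` iff `t d ≤ i`. -/
structure IsGreedyState {m : ℕ} {J : Type*} [DecidableEq J] (t : J → ℕ) (P : Set J)
    (M : Finset (Fin m × J)) : Prop where
  isMatching : IsMatching M
  feasible : ∀ p ∈ M, t p.2 ≤ p.1
  snd_mem : ∀ p ∈ M, p.2 ∈ P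
  no_gap : ∀ p ∈ M, ∀ q : Fin m, t p.2 ≤ q → q < p.1 → q ∈ M.image Prod.fst
  saturated : ∀ d ∈ P, d ∉ M.image Prod.snd → ∀ q : Fin m, t d ≤ q → q ∈ M.image Prod.fst

namespace IsGreedyState

variable {m : ℕ} {J : Type*} [DecidableEq J] {t : J → ℕ} {P : Set J} {M : Finset (Fin m × J)}

theorem empty : IsGreedyState t ∅ (∅ : Finset (Fin m × J)) :=
  ⟨⟨by simp, by simp⟩, by simp, by simp, by simp, by simp⟩

theorem insert_of_saturated (h : IsGreedyState t P M) {d : J}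
    (hsat : ∀ q : Fin m, t d ≤ q → q ∈ M.image Prod.fst) : IsGreedyState t (insert d P) M where
  isMatching := h.isMatching
  feasible := h.feasible
  snd_mem p hp := Set.mem_insert_of_mem _ (h.snd_mem p hp)
  no_gap := h.no_gap
  saturated d' hd' hun := by
    rcases hd' with rfl | hd'
    exacts [hsat, h.saturated d' hd' hun]

theorem insert_least (h : IsGreedyState t P M) {d : J} (hd : d ∉ P) {i : Fin m}
    (hi : i ∉ M.image Prod.fst) (hti : t d ≤ i)
    (hmin : ∀ q : Fin m, q ∉ M.image Prod.fst → t d ≤ q → i ≤ q) :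
    IsGreedyState t (insert d P) (insert (i, d) M) := by
  have hdM : d ∉ M.image Prod.snd := fun hdM =>
    let ⟨p, hp, hpd⟩ := mem_image.1 hdM
    hd (hpd ▸ h.snd_mem p hp)
  have hused : M.image Prod.fst ⊆ (insert (i, d) M).image Prod.fst :=
    image_subset_image (subset_insert _ _)
  refine ⟨h.isMatching.insert hi hdM, ?_, ?_, ?_, ?_⟩
  · intro p hp
    rcases mem_insert.1 hp with rfl | hp
    exacts [hti, h.feasible p hp]
  · intro p hp
    rcases mem_insert.1 hp with rfl | hp
    exacts [Set.mem_insert _ _, Set.mem_insert_of_mem _ (h.snd_mem p hp)]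
  · intro p hp q hq hqp
    rcases mem_insert.1 hp with rfl | hp
    · by_contra hfree
      exact absurd (hmin q (fun hq' => hfree (hused hq')) hq) (not_le.2 hqp)
    · exact hused (h.no_gap p hp q hq hqp)
  · intro d' hd' hun q hq
    have hun' : d' ∉ M.image Prod.snd := fun h' =>
      hun (image_subset_image (subset_insert _ _) h')
    rcases hd' with rfl | hd'
    · exact absurd (mem_image.2 ⟨_, mem_insert_self _ _, rfl⟩) hun
    · exact hused (h.saturated d' hd' hun' q hq)

theorem exists_le_card_filter [Fintype J] (h : IsGreedyState t Set.univ M) :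
    ∃ i ≤ m, (m - i) + (Fintype.card J - #M) ≤ #{d | i ≤ t d} := by
  set U := M.image Prod.fst
  set T : Set ℕ := {i | ∀ q : Fin m, i ≤ q → q ∈ U}
  have hmT : m ∈ T := fun q hq => absurd q.isLt (not_lt.2 hq)
  set i₀ := sInf T
  have hsuffix : ∀ q : Fin m, i₀ ≤ q → q ∈ U := Nat.sInf_mem ⟨m, hmT⟩
  have hrejected : ∀ d ∉ M.image Prod.snd, i₀ ≤ t d := fun d hd =>
    Nat.sInf_le (h.saturated d trivial hd)
  have hmatched : ∀ p ∈ M, i₀ ≤ p.1 → i₀ ≤ t p.2 := by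
    intro p hp hp₁
    by_contra hlt
    obtain ⟨q, hq, hqU⟩ : ∃ q : Fin m, i₀ - 1 ≤ q ∧ q ∉ U := by
      simpa [T] using Nat.notMem_of_lt_sInf (s := T) (show i₀ - 1 < i₀ by omega)
    have hqi₀ : (q : ℕ) < i₀ := lt_of_not_ge fun hge => hqU (hsuffix q hge)
    exact hqU (h.no_gap p hp q (by omega) (by omega))
  set A := M.filter fun p => i₀ ≤ p.1
  have hA : #A = m - i₀ := by
    rw [← h.isMatching.card_image_fst (filter_subset _ _), ← Fin.card_filter_le_val]
    congr 1
    ext q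
    simp only [mem_image, mem_filter, mem_univ, true_and]
    refine ⟨fun ⟨p, ⟨_, hp⟩, hpq⟩ => hpq ▸ hp, fun hq => ?_⟩
    obtain ⟨p, hp, rfl⟩ := mem_image.1 (hsuffix q hq)
    exact ⟨p, ⟨hp, hq⟩, rfl⟩
  refine ⟨i₀, Nat.sInf_le hmT, ?_⟩
  calc (m - i₀) + (Fintype.card J - #M)
      = #(A.image Prod.snd) + #(M.image Prod.snd)ᶜ := by
        rw [h.isMatching.card_image_snd (filter_subset _ _), hA, card_compl,
          h.isMatching.card_image_snd subset_rfl]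
    _ = #(A.image Prod.snd ∪ (M.image Prod.snd)ᶜ) := by
        refine (card_union_of_disjoint (disjoint_left.2 fun d hd hd' => ?_)).symm
        exact mem_compl.1 hd' (image_subset_image (filter_subset _ _) hd)
    _ ≤ #{d | i₀ ≤ t d} := by
        refine card_le_card fun d hd => mem_filter.2 ⟨mem_univ _, ?_⟩
        rcases mem_union.1 hd with hd | hd
        · obtain ⟨p, hp, rfl⟩ := mem_image.1 hd
          exact hmatched p (mem_filter.1 hp).1 (mem_filter.1 hp).2
        · exact hrejected d (mem_compl.1 hd)

end IsGreedyState

section GSM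

variable {m n : ℕ} {τ : Fin m → ℕ} {w : Fin n → ℕ}

theorem gsmPick_eq_none {used : Finset (Fin m)} {wd : ℕ} (h : gsmPick τ used wd = none)
    (i : Fin m) (hi : wd ≤ τ i) : i ∈ used := by
  by_contra hiu
  unfold gsmPick at h
  rw [dif_pos ⟨i, by simp [hiu, hi]⟩] at h
  cases h

theorem gsmPick_eq_some {used : Finset (Fin m)} {wd : ℕ} {i : Fin m}
    (h : gsmPick τ used wd = some i) :
    i ∉ used ∧ wd ≤ τ i ∧ ∀ q ∉ used, wd ≤ τ q → i ≤ q := by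
  unfold gsmPick at h
  dsimp only at h
  split_ifs at h with hne
  cases h
  obtain ⟨-, hiu, hi⟩ := mem_filter.1 (min'_mem _ hne)
  exact ⟨hiu, hi, fun q hqu hq => min'_le _ q (by simp [hqu, hq])⟩

theorem gsmRunOn_append_singleton (ds : List (Fin n)) (d : Fin n) :
    gsmRunOn τ w (ds ++ [d]) =
      match gsmPick τ ((gsmRunOn τ w ds).image Prod.fst) (w d) with
      | some i => insert (i, d) (gsmRunOn τ w ds)
      | none => gsmRunOn τ w ds :=
  List.foldl_append

theorem isGreedyState_gsmRunOn (hτ : Monotone τ) (ds : List (Fin n)) (hds : ds.Nodup) :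
    IsGreedyState (fun d => tIdx τ (w d)) {d | d ∈ ds} (gsmRunOn τ w ds) := by
  induction ds using List.reverseRecOn with
  | nil =>
    show IsGreedyState _ {d | d ∈ []} ∅
    simpa using IsGreedyState.empty
  | append_singleton ds d ih =>
    obtain ⟨hds, -, hd⟩ := List.nodup_append.1 hds
    have ih := ih hds
    have hP : {e | e ∈ ds ++ [d]} = insert d {e | e ∈ ds} := by ext; simp [or_comm]
    rw [gsmRunOn_append_singleton, hP]
    split
    case h_1 i hpick =>
      obtain ⟨hiu, hi, hmin⟩ := gsmPick_eq_some hpick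
      exact ih.insert_least (fun hd' => hd d hd' d (List.mem_singleton_self d) rfl) hiu
        ((tIdx_le_iff hτ _ i).2 hi) fun q hqu hq => hmin q hqu ((tIdx_le_iff hτ _ q).1 hq)
    case h_2 hpick =>
      exact ih.insert_of_saturated fun q hq =>
        gsmPick_eq_none hpick q ((tIdx_le_iff hτ _ q).1 hq)

theorem card_add_deficiency_le {M : Finset (Fin m × Fin n)} (hM : IsMatching M)
    (hfeas : ∀ p ∈ M, w p.2 ≤ τ p.1) : #M + deficiency τ w ≤ n := by
  have hfeas' : ∀ p ∈ M, tIdx τ (w p.2) ≤ p.1 := fun p hp => tIdx_le_of_le τ (hfeas p hp)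
  have hMn : #M ≤ n := by
    simpa [hM.card_image_snd subset_rfl] using card_le_univ (M.image Prod.snd)
  suffices deficiency τ w ≤ n - #M by omega
  refine Finset.sup_le fun i _ => ?_
  have := hM.card_add_card_filter_le (t := fun d => tIdx τ (w d)) hfeas' i
  rw [Fintype.card_fin] at this
  omega

theorem le_card_add_deficiency {M : Finset (Fin m × Fin n)}
    (h : IsGreedyState (fun d => tIdx τ (w d)) Set.univ M) : n ≤ #M + deficiency τ w := by
  obtain ⟨i, hi, hle⟩ := h.exists_le_card_filter
  have := le_sup (f := fun i => #{d | i ≤ tIdx τ (w d)} - (m - i))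
    (mem_range.2 (show i < m + 1 by omega))
  rw [Fintype.card_fin] at hle
  simp only [deficiency] at *
  omega

end GSM

/-- for any (adversarial) arrival order of the `n` jobs, the GSM
matching has maximum cardinality among all matchings of the feasibility graph,
and `|M_GSM| = n − Δ`. -/
theorem gsm_maximum_and_cardinality
    {m n : ℕ} (τ : Fin m → ℕ) (hτ : Monotone τ) (w : Fin n → ℕ)
    (ds : List (Fin n)) (hds : ds.Perm (List.finRange n)) :
    (∀ M : Finset (Fin m × Fin n), IsMatching M → (∀ p ∈ M, w p.2 ≤ τ p.1) →
      M.card ≤ (gsmRunOn τ w ds).card) ∧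
    (gsmRunOn τ w ds).card = n - deficiency τ w := by
  have hgsm : IsGreedyState (fun d => tIdx τ (w d)) Set.univ (gsmRunOn τ w ds) := by
    have h := isGreedyState_gsmRunOn (w := w) hτ ds (hds.nodup_iff.2 (List.nodup_finRange n))
    simpa [hds.mem_iff] using h
  have hupper := card_add_deficiency_le hgsm.isMatching
    fun p hp => (tIdx_le_iff hτ _ p.1).1 (hgsm.feasible p hp)
  have hcard : #(gsmRunOn τ w ds) = n - deficiency τ w := by
    have := le_card_add_deficiency hgsm
    omega
  refine ⟨fun M hM hfeas => ?_, hcard⟩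
  have := card_add_deficiency_le hM hfeas
  omega
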